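/- arXiv:2008.04668 — 2 statements merged into one kernel-verified Lean document; each statement's English description precedes it below -/
import Mathlib

section
/- Let 𝒢 be an ultragraph without sinks. If 𝒢 satisfies Condition (K), then the ultragraph groupoid 𝔊_𝒢 is strongly effective: for every nonempty closed invariant subset U of the unit space 𝔊_𝒢⁽⁰⁾, the restriction 𝔊_𝒢|_U = {g ∈ 𝔊_𝒢 : s(g), r(g) ∈ U} is effective, i.e., the interior of Iso(𝔊_𝒢|_U) ∖ (𝔊_𝒢|_U)⁽⁰⁾ is empty, where Iso denotes the set of elements whose source equals their range. -/
set_option synthInstance.maxHeartbeats 1000000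
set_option maxHeartbeats 1000000

noncomputable section
open Classical TensorProduct

/-- An ultragraph: countable sets of vertices and edges (countability is imposed in the
theorems), a source map and a range map taking nonempty sets of vertices. -/
structure Ultragraph (V E : Type) where
  s : E → V
  r : E → Set V
  r_nonempty : ∀ e, (r e).Nonempty

namespace Ultragraph

variable {V E : Type}

/-- Membership in `𝒢⁰`: the smallest collection of subsets of `G⁰` containing the
singletons and the ranges of edges, closed under finite unions and intersections. -/
inductive IsG0 (U : Ultragraph V E) : Set V → Prop
  | vertex (v : V) : IsG0 U {v}
  | range (e : E) : IsG0 U (U.r e)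
  | union {A B : Set V} : IsG0 U A → IsG0 U B → IsG0 U (A ∪ B)
  | inter {A B : Set V} : IsG0 U A → IsG0 U B → IsG0 U (A ∩ B)

variable (U : Ultragraph V E)

/-- No sinks: every vertex emits at least one edge. -/
def HasNoSinks : Prop := ∀ v : V, ∃ e : E, U.s e = v

/-- No vertex is an infinite emitter. -/
def NoInfiniteEmitters : Prop := ∀ v : V, {e : E | U.s e = v}.Finite

/-- A regular vertex: `0 < |s⁻¹(v)| < ∞`. -/
def IsRegular (v : V) : Prop := {e : E | U.s e = v}.Nonempty ∧ {e : E | U.s e = v}.Finite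

/-- Two edges are composable when the source of the second lies in the range of the first. -/
def Adj (e f : E) : Prop := U.s f ∈ U.r e

/-- A (possibly empty) compatible list of edges. -/
def IsEdgePath (l : List E) : Prop := List.Chain' U.Adj l

/-- Range of a list of edges: the range of its last edge (junk value `∅` on `[]`). -/
def rList (l : List E) : Set V :=
  match l.getLast? with
  | some e => U.r e
  | none => ∅

/-- A finite path in `𝒢*`: either an element of `𝒢⁰` (length `0`) or a nonempty
compatible list of edges. -/
def IsFPath : Set V ⊕ List E → Prop
  | Sum.inl A => U.IsG0 A
  | Sum.inr l => l ≠ [] ∧ U.IsEdgePath l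

/-- Range of a finite path. -/
def rF : Set V ⊕ List E → Set V
  | Sum.inl A => A
  | Sum.inr l => U.rList l

/-- "The source of the finite path `α` is the vertex `v`". -/
def sFMatch : Set V ⊕ List E → V → Prop
  | Sum.inl A, v => A = ({v} : Set V)
  | Sum.inr l, v => ∃ e, l.head? = some e ∧ U.s e = v

/-- A cycle: a nonempty path whose source vertex belongs to its range. -/
def IsCycle (c : List E) : Prop :=
  c ≠ [] ∧ U.IsEdgePath c ∧ ∃ e, c.head? = some e ∧ U.s e ∈ U.rList c

/-- A first-return path based at `v`. -/
def IsFirstReturn (v : V) (c : List E) : Prop :=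
  c ≠ [] ∧ U.IsEdgePath c ∧ (∃ e, c.head? = some e ∧ U.s e = v) ∧ v ∈ U.rList c ∧
    ∀ (i : ℕ) (h : i < c.length), 0 < i → U.s (c.get ⟨i, h⟩) ≠ v

/-- Condition (K). -/
def ConditionK : Prop :=
  ∀ v : V, (∀ c : List E, ¬ U.IsFirstReturn v c) ∨
    ∃ c₁ c₂ : List E, U.IsFirstReturn v c₁ ∧ U.IsFirstReturn v c₂ ∧ c₁ ≠ c₂

/-- `w ≥ v`: there is a finite path with source `w` whose range contains `v`. -/
def VGe (w v : V) : Prop := ∃ α : Set V ⊕ List E, U.IsFPath α ∧ U.sFMatch α w ∧ v ∈ U.rF α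

/-- An ultrapath, given as raw data `(α, A)` (a list of edges and a range set):
the list is compatible, `A ∈ 𝒢⁰` and `A ⊆ r(α)` when `α` is nonempty.
Length-zero ultrapaths `( [], A )` are the elements `A ∈ 𝒢⁰`. -/
def IsUPath (x : List E × Set V) : Prop :=
  U.IsEdgePath x.1 ∧ U.IsG0 x.2 ∧ ∀ e, x.1.getLast? = some e → x.2 ⊆ U.r e

/-- The "source" of an ultrapath, as a set: the singleton on the source of its first edge,
or the set itself in length zero. -/
def srcSet (x : List E × Set V) : Set V :=
  match x.1.head? with
  | some e => {U.s e}
  | none => x.2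

/-- The concatenation `x · y` is defined. -/
def CanConcatU (x y : List E × Set V) : Prop := (x.2 ∩ U.srcSet y).Nonempty

/-- An infinite path. -/
def IsIPath (p : ℕ → E) : Prop := ∀ n : ℕ, U.s (p (n + 1)) ∈ U.r (p n)

/-- The principal filter of `A` in the meet-semilattice `𝒢⁰`. -/
def principalFilter (A : Set V) : Set (Set V) := {B | U.IsG0 B ∧ A ⊆ B}

/-- A filter in `𝒢⁰`. -/
def IsFilterG0 (F : Set (Set V)) : Prop :=
  (∀ B ∈ F, U.IsG0 B) ∧ (∅ : Set V) ∉ F ∧ (∀ A ∈ F, ∀ B ∈ F, A ∩ B ∈ F) ∧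
    ∀ A ∈ F, ∀ B : Set V, U.IsG0 B → A ⊆ B → B ∈ F

/-- An ultraset: an element of `𝒢⁰` whose principal filter is an ultrafilter in `𝒢⁰`. -/
def IsUltraset (A : Set V) : Prop :=
  U.IsG0 A ∧ U.IsFilterG0 (U.principalFilter A) ∧
    ∀ F : Set (Set V), U.IsFilterG0 F → U.principalFilter A ⊆ F → F = U.principalFilter A

/-- `A` is an infinite emitter (as a set). -/
def InfEmitterSet (A : Set V) : Prop := {e : E | U.s e ∈ A}.Infinite

end Ultragraph

/-- Concatenation of ultrapaths (raw operation). -/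
def concatU {V E : Type} (x y : List E × Set V) : List E × Set V :=
  (x.1 ++ y.1, if y.1 = [] then x.2 ∩ y.2 else y.2)

/-- Prepend a finite list of edges to an infinite path. -/
def prependL {E : Type} (l : List E) (p : ℕ → E) : ℕ → E :=
  fun n => if h : n < l.length then l.get ⟨n, h⟩ else p (n - l.length)

/-- The periodic infinite path `ccc⋯` determined by a nonempty list `c`. -/
def periodicL {E : Type} (c : List E) (hc : c ≠ []) : ℕ → E :=
  fun n => c.get ⟨n % c.length, Nat.mod_lt n (List.length_pos_iff.mpr hc)⟩

/-- Shift of an infinite path: `τ_{>m}`. -/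
def shiftL {E : Type} (m : ℕ) (p : ℕ → E) : ℕ → E := fun n => p (n + m)

/-- Tail-equivalence of infinite paths. -/
def IPEquiv {E : Type} (p q : ℕ → E) : Prop := ∃ m n : ℕ, shiftL m p = shiftL n q

namespace Ultragraph

variable {V E : Type} (U : Ultragraph V E)

/-- Elements of `X_𝒢 = Y_∞ ∪ 𝔭^∞` (raw data): a finite ultrapath or an infinite path. -/
abbrev XType (V E : Type) : Type := (List E × Set V) ⊕ (ℕ → E)

/-- Concatenation of an ultrapath with an element of `X_𝒢` (raw operation). -/
def concatXel (x : List E × Set V) : XType V E → XType V E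
  | Sum.inl y => Sum.inl (concatU x y)
  | Sum.inr p => Sum.inr (prependL x.1 p)

/-- Membership in `X_𝒢`. -/
def IsXEl : XType V E → Prop
  | Sum.inl y => U.IsUPath y ∧ U.IsUltraset y.2 ∧ U.InfEmitterSet y.2
  | Sum.inr p => U.IsIPath p

/-- The concatenation `x · μ` is defined. -/
def CanConcatX (x : List E × Set V) : XType V E → Prop
  | Sum.inl y => U.CanConcatU x y
  | Sum.inr p => U.s (p 0) ∈ x.2

/-- Raw triples, of which the ultragraph groupoid consists. -/
abbrev Trip (V E : Type) : Type := XType V E × ℤ × XType V E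

/-- Membership in the ultragraph groupoid
`𝔊_𝒢 = {(x·μ, |x|−|y|, y·μ) : x, y ∈ 𝔭, μ ∈ X_𝒢, r(x) = r(y), x·μ, y·μ ∈ X_𝒢}`. -/
def InGrpd (g : Trip V E) : Prop :=
  ∃ (x y : List E × Set V) (μ : XType V E),
    U.IsUPath x ∧ U.IsUPath y ∧ U.IsXEl μ ∧ x.2 = y.2 ∧
    U.CanConcatX x μ ∧ U.CanConcatX y μ ∧
    U.IsXEl (concatXel x μ) ∧ U.IsXEl (concatXel y μ) ∧
    g = (concatXel x μ, (x.1.length : ℤ) - (y.1.length : ℤ), concatXel y μ)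

end Ultragraph

/-- Composition in the ultragraph groupoid: `(u,k,v)(v,l,w) = (u,k+l,w)` (raw operation). -/
def compT {V E : Type} (a b : Ultragraph.Trip V E) : Ultragraph.Trip V E :=
  (a.1, a.2.1 + b.2.1, b.2.2)

namespace Ultragraph

variable {V E : Type} (U : Ultragraph V E)

/-- The degree-`n` component `(𝔊_𝒢)_n` of the ℤ-graded ultragraph groupoid. -/
def gradeSet (n : ℤ) : Set (Trip V E) := {g | U.InGrpd g ∧ g.2.1 = n}

/-- Product of two subsets of the groupoid: `ST = {ab : a ∈ S, b ∈ T composable}`. -/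
def setMulG (S T : Set (Trip V E)) : Set (Trip V E) :=
  {c | ∃ a ∈ S, ∃ b ∈ T, a.2.2 = b.1 ∧ c = compT a b}

/-- The carrier of the ultragraph groupoid `𝔊_𝒢`. -/
def Grpd : Type := {g : Trip V E // U.InGrpd g}

/-- The set `𝒜(x,y)`. -/
def ASetRaw (x y : List E × Set V) : Set (Trip V E) :=
  {g | ∃ μ : XType V E, U.IsXEl μ ∧ U.CanConcatX x μ ∧ U.CanConcatX y μ ∧
      U.IsXEl (concatXel x μ) ∧ U.IsXEl (concatXel y μ) ∧
      g = (concatXel x μ, (x.1.length : ℤ) - (y.1.length : ℤ), concatXel y μ)}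

/-- The set `𝒜(x,y)` inside the groupoid. -/
def ASet (x y : List E × Set V) : Set U.Grpd := {g | g.1 ∈ U.ASetRaw x y}

/-- The basic set `𝒜(x,y,K,Q)`. -/
def ABasic (x y : List E × Set V) (Ke : Set E) (Q : Set (Set V)) : Set U.Grpd :=
  U.ASet x y \
    ((⋃ e ∈ Ke, U.ASet (concatU x ([e], U.r e)) (concatU y ([e], U.r e))) ∪
      ⋃ C ∈ Q, U.ASet (concatU x (([] : List E), C)) (concatU y (([] : List E), C)))

/-- The collection of all basic open sets `𝒜(x,y,K,Q)`. -/
def BasicSets : Set (Set U.Grpd) :=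
  {S | ∃ (x y : List E × Set V) (Ke : Set E) (Q : Set (Set V)),
      U.IsUPath x ∧ U.IsUPath y ∧ x.2 = y.2 ∧
      (∀ e ∈ Ke, U.s e ∈ x.2) ∧ Ke.Finite ∧ (∀ C ∈ Q, U.IsG0 C) ∧ Q.Finite ∧
      S = U.ABasic x y Ke Q}

/-- The topology of the ultragraph groupoid, generated by the sets `𝒜(x,y,K,Q)`. -/
instance : TopologicalSpace U.Grpd := TopologicalSpace.generateFrom U.BasicSets

/-- The unit space `𝔊_𝒢⁽⁰⁾ = {(μ,0,μ) : μ ∈ X_𝒢}` inside the groupoid. -/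
def unitSpaceSet : Set U.Grpd := {g | g.1.2.1 = 0 ∧ g.1.1 = g.1.2.2}

end Ultragraph

/-- The source unit `s(u,k,v) = (v,0,v)` of a raw triple. -/
def srcT {V E : Type} (g : Ultragraph.Trip V E) : Ultragraph.Trip V E := (g.2.2, 0, g.2.2)

/-- The range unit `r(u,k,v) = (u,0,u)` of a raw triple. -/
def rngT {V E : Type} (g : Ultragraph.Trip V E) : Ultragraph.Trip V E := (g.1, 0, g.1)

namespace Ultragraph

variable {V E : Type} (U : Ultragraph V E)

/-- A subset `D` of the unit space is invariant if `s(γ) ∈ D` implies `r(γ) ∈ D`. -/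
def InvariantSet (D : Set U.Grpd) : Prop :=
  ∀ g : U.Grpd, ∀ (h1 : U.InGrpd (srcT g.1)) (h2 : U.InGrpd (rngT g.1)),
    (⟨srcT g.1, h1⟩ : U.Grpd) ∈ D → (⟨rngT g.1, h2⟩ : U.Grpd) ∈ D

/-- The source of `g` lies in `D`. -/
def SrcInD (D : Set U.Grpd) (g : U.Grpd) : Prop :=
  ∃ h : U.InGrpd (srcT g.1), (⟨srcT g.1, h⟩ : U.Grpd) ∈ D

/-- The range of `g` lies in `D`. -/
def RngInD (D : Set U.Grpd) (g : U.Grpd) : Prop :=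
  ∃ h : U.InGrpd (rngT g.1), (⟨rngT g.1, h⟩ : U.Grpd) ∈ D

/-- The restriction `𝔊_𝒢|_D` of the groupoid to a subset `D` of the unit space. -/
def RestrSet (D : Set U.Grpd) : Set U.Grpd := {g | U.SrcInD D g ∧ U.RngInD D g}

/-- The ultragraph groupoid is minimal: the unit space has no nontrivial open
invariant subsets. -/
def IsMinimalGrpd : Prop :=
  ∀ D : Set U.Grpd, D ⊆ U.unitSpaceSet →
    IsOpen {u : U.unitSpaceSet | (u : U.Grpd) ∈ D} → U.InvariantSet D →
      D = ∅ ∨ D = U.unitSpaceSet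

end Ultragraph

namespace Ultragraph

variable {V E : Type}

/-- Generators of the ultragraph Leavitt path algebra: `p_A` (`A ∈ 𝒢⁰`), `s_e`, `s*_e`. -/
inductive LGen (U : Ultragraph V E) : Type
  | pr : {A : Set V // U.IsG0 A} → LGen U
  | ed : E → LGen U
  | st : E → LGen U

variable (K : Type) [Field K] (U : Ultragraph V E)

/-- The defining relations of the ultragraph Leavitt path algebra. -/
inductive LRel : FreeAlgebra K (LGen U) → FreeAlgebra K (LGen U) → Prop
  | pEmpty (h : U.IsG0 (∅ : Set V)) :
      LRel (FreeAlgebra.ι K (LGen.pr ⟨∅, h⟩)) 0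
  | pInter (A B : {A : Set V // U.IsG0 A}) :
      LRel (FreeAlgebra.ι K (LGen.pr A) * FreeAlgebra.ι K (LGen.pr B))
        (FreeAlgebra.ι K (LGen.pr ⟨A.1 ∩ B.1, IsG0.inter A.2 B.2⟩))
  | pUnion (A B : {A : Set V // U.IsG0 A}) :
      LRel (FreeAlgebra.ι K (LGen.pr ⟨A.1 ∪ B.1, IsG0.union A.2 B.2⟩))
        (FreeAlgebra.ι K (LGen.pr A) + FreeAlgebra.ι K (LGen.pr B) -
          FreeAlgebra.ι K (LGen.pr ⟨A.1 ∩ B.1, IsG0.inter A.2 B.2⟩))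
  | sLeft (e : E) :
      LRel (FreeAlgebra.ι K (LGen.pr ⟨{U.s e}, IsG0.vertex (U.s e)⟩) * FreeAlgebra.ι K (LGen.ed e))
        (FreeAlgebra.ι K (LGen.ed e))
  | sRight (e : E) :
      LRel (FreeAlgebra.ι K (LGen.ed e) * FreeAlgebra.ι K (LGen.pr ⟨U.r e, IsG0.range e⟩))
        (FreeAlgebra.ι K (LGen.ed e))
  | stLeft (e : E) :
      LRel (FreeAlgebra.ι K (LGen.pr ⟨U.r e, IsG0.range e⟩) * FreeAlgebra.ι K (LGen.st e))
        (FreeAlgebra.ι K (LGen.st e))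
  | stRight (e : E) :
      LRel (FreeAlgebra.ι K (LGen.st e) * FreeAlgebra.ι K (LGen.pr ⟨{U.s e}, IsG0.vertex (U.s e)⟩))
        (FreeAlgebra.ι K (LGen.st e))
  | ortho (e f : E) (h : e ≠ f) :
      LRel (FreeAlgebra.ι K (LGen.st e) * FreeAlgebra.ι K (LGen.ed f)) 0
  | ck1 (e : E) :
      LRel (FreeAlgebra.ι K (LGen.st e) * FreeAlgebra.ι K (LGen.ed e))
        (FreeAlgebra.ι K (LGen.pr ⟨U.r e, IsG0.range e⟩))
  | ck2 (v : V) (h : U.IsRegular v) :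
      LRel (FreeAlgebra.ι K (LGen.pr ⟨{v}, IsG0.vertex v⟩))
        (h.2.toFinset.sum fun e => FreeAlgebra.ι K (LGen.ed e) * FreeAlgebra.ι K (LGen.st e))

/-- The ultragraph Leavitt path algebra `L_K(𝒢)`, presented by generators and relations.
(For a non-unital `L_K(𝒢)` this is its unitalization; the algebra itself is the
subspace `Lsub` spanned by the monomials `s_α p_A s*_β`.) -/
abbrev LPA : Type := RingQuot (LRel K U)

/-- The generator `p_A`. -/
def pGen (A : Set V) (h : U.IsG0 A) : LPA K U :=
  RingQuot.mkAlgHom K (LRel K U) (FreeAlgebra.ι K (LGen.pr ⟨A, h⟩))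

/-- The generator `s_e`. -/
def sGen (e : E) : LPA K U :=
  RingQuot.mkAlgHom K (LRel K U) (FreeAlgebra.ι K (LGen.ed e))

/-- The generator `s*_e`. -/
def stGen (e : E) : LPA K U :=
  RingQuot.mkAlgHom K (LRel K U) (FreeAlgebra.ι K (LGen.st e))

/-- `s_α` for a list of edges `α`. -/
def sPath (l : List E) : LPA K U := (l.map (sGen K U)).prod

/-- `s*_α` for a list of edges `α`. -/
def stPath (l : List E) : LPA K U := (l.reverse.map (stGen K U)).prod

/-- The degree-`n` homogeneous component
`L_K(𝒢)_n = span_K { s_α p_A s*_β : |α| − |β| = n }`. -/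
def homComp (n : ℤ) : Submodule K (LPA K U) :=
  Submodule.span K {x : LPA K U | ∃ (α β : List E) (A : Set V) (hA : U.IsG0 A),
    (α.length : ℤ) - (β.length : ℤ) = n ∧
    x = sPath K U α * pGen K U A hA * stPath K U β}

/-- The Leavitt path algebra `L_K(𝒢)` itself: the span of all monomials `s_α p_A s*_β`
inside the (possibly unitalized) presented algebra. -/
def Lsub : Submodule K (LPA K U) :=
  Submodule.span K {x : LPA K U | ∃ (α β : List E) (A : Set V) (hA : U.IsG0 A),
    x = sPath K U α * pGen K U A hA * stPath K U β}

/-- `s_α` for a finite path `α ∈ 𝒢*` (with `s_A = p_A` in length zero). -/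
def sFMono : (α : Set V ⊕ List E) → U.IsFPath α → LPA K U
  | Sum.inl A, h => pGen K U A h
  | Sum.inr l, _ => sPath K U l

/-- `s*_α` for a finite path `α ∈ 𝒢*` (with `s*_A = p_A` in length zero). -/
def stFMono : (α : Set V ⊕ List E) → U.IsFPath α → LPA K U
  | Sum.inl A, h => pGen K U A h
  | Sum.inr l, _ => stPath K U l

/-- A (two-sided) ideal of `L_K(𝒢)` (sitting inside the presented algebra). -/
def IsTwoSidedIdealOfL (I : Set (LPA K U)) : Prop :=
  I ⊆ (Lsub K U : Set (LPA K U)) ∧ (0 : LPA K U) ∈ I ∧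
    (∀ a ∈ I, ∀ b ∈ I, a + b ∈ I) ∧ (∀ a ∈ I, -a ∈ I) ∧
    (∀ k : K, ∀ a ∈ I, k • a ∈ I) ∧
    ∀ a ∈ I, ∀ x ∈ (Lsub K U : Set (LPA K U)), a * x ∈ I ∧ x * a ∈ I

/-- A right ideal of `L_K(𝒢)`. -/
def IsRightIdealOfL (I : Set (LPA K U)) : Prop :=
  I ⊆ (Lsub K U : Set (LPA K U)) ∧ (0 : LPA K U) ∈ I ∧
    (∀ a ∈ I, ∀ b ∈ I, a + b ∈ I) ∧ (∀ a ∈ I, -a ∈ I) ∧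
    (∀ k : K, ∀ a ∈ I, k • a ∈ I) ∧
    ∀ a ∈ I, ∀ x ∈ (Lsub K U : Set (LPA K U)), a * x ∈ I

/-- A left ideal of `L_K(𝒢)`. -/
def IsLeftIdealOfL (I : Set (LPA K U)) : Prop :=
  I ⊆ (Lsub K U : Set (LPA K U)) ∧ (0 : LPA K U) ∈ I ∧
    (∀ a ∈ I, ∀ b ∈ I, a + b ∈ I) ∧ (∀ a ∈ I, -a ∈ I) ∧
    (∀ k : K, ∀ a ∈ I, k • a ∈ I) ∧
    ∀ a ∈ I, ∀ x ∈ (Lsub K U : Set (LPA K U)), x * a ∈ I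

/-- A subset of `L_K(𝒢)` is graded if each of its elements is a sum of homogeneous
elements lying in it. -/
def IsGradedSet (I : Set (LPA K U)) : Prop :=
  I ⊆ (AddSubgroup.closure {a : LPA K U | a ∈ I ∧ ∃ n : ℤ, a ∈ homComp K U n} :
    Set (LPA K U))

/-- The right ideal of `L_K(𝒢)` generated by a set. -/
def rIdealGen (S : Set (LPA K U)) : Set (LPA K U) :=
  ⋂₀ {I : Set (LPA K U) | IsRightIdealOfL K U I ∧ S ⊆ I}

/-- The left ideal of `L_K(𝒢)` generated by a set. -/
def lIdealGen (S : Set (LPA K U)) : Set (LPA K U) :=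
  ⋂₀ {I : Set (LPA K U) | IsLeftIdealOfL K U I ∧ S ⊆ I}

/-- Powers of an ideal: `J, J², J³, …` (as sets, `idealPow J n = J^{n+1}`). -/
def idealPow (J : Set (LPA K U)) : ℕ → Set (LPA K U)
  | 0 => J
  | n + 1 => (AddSubgroup.closure
      {z : LPA K U | ∃ a ∈ J, ∃ b ∈ idealPow J n, z = a * b} : Set (LPA K U))

end Ultragraph

namespace Ultragraph

variable {V E : Type} (U : Ultragraph V E)

/-- Condition (2) of the strong-grading criterion: for every `k ∈ ℕ` and every infinite
path `p`, there are an initial subpath `x` of `p` and a finite path `y ∈ 𝒢*` with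
`r(x) = r(y)` and `|y| − |x| = k`. -/
def GradedCond2 : Prop :=
  ∀ (k : ℕ) (p : ℕ → E), U.IsIPath p →
    ∃ n : ℕ, 0 < n ∧ ∃ y : List E, y ≠ [] ∧ U.IsEdgePath y ∧
      U.rList y = U.r (p (n - 1)) ∧ (y.length : ℤ) - (n : ℤ) = (k : ℤ)

variable (K : Type) [Field K]

/-- The projection onto the degree-`n` homogeneous component (obtained by choice from the
internal decomposition of the grading; `0` if no such family of projections exists). -/
noncomputable def gradedProj (n : ℤ) : LPA K U →ₗ[K] LPA K U :=
  if h : ∃ P : ℤ → (LPA K U →ₗ[K] LPA K U),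
      (∀ (m : ℤ) (x : LPA K U), P m x ∈ homComp K U m) ∧
      (∀ m : ℤ, ∀ x ∈ homComp K U m, P m x = x) ∧
      (∀ m k' : ℤ, m ≠ k' → ∀ x ∈ homComp K U k', P m x = 0)
  then h.choose n else 0

/-- Multiplication of the smash product `L_K(𝒢) # ℤ`:
`(a p_m)(b p_n) = a·b_{m−n} p_n`, where elements of `L_K(𝒢) # ℤ` are finitely
supported functions `ℤ →₀ L_K(𝒢)`. -/
noncomputable def smashMul (x y : ℤ →₀ LPA K U) : ℤ →₀ LPA K U :=
  x.sum fun m a => y.sum fun n b => Finsupp.single n (a * gradedProj U K (m - n) b)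

end Ultragraph

/-- The skew product ultragraph `𝒢 ×₁ ℤ`. -/
def Ultragraph.skewZ {V E : Type} (U : Ultragraph V E) : Ultragraph (V × ℤ) (E × ℤ) where
  s := fun en => (U.s en.1, en.2)
  r := fun en => (fun w => (w, en.2 - 1)) '' U.r en.1
  r_nonempty := fun en => (U.r_nonempty en.1).image _

namespace Ultragraph

variable {V E : Type} (U : Ultragraph V E) (K : Type) [Field K]

/-- Composability of two groupoid elements. -/
def Composable (a b : U.Grpd) : Prop := a.1.2.2 = b.1.1

/-- Convolution product of functions on the groupoid:
`(f * g)(γ) = Σ_{γ = αβ} f(α) g(β)`. -/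
noncomputable def convK (f g : U.Grpd → K) : U.Grpd → K :=
  fun γ => ∑ᶠ q : {q : U.Grpd × U.Grpd // U.Composable q.1 q.2 ∧ compT q.1.1 q.2.1 = γ.1},
    f q.1.1 * g q.1.2

/-- A compact open bisection of the ultragraph groupoid. -/
def IsCOB (W : Set U.Grpd) : Prop :=
  IsCompact W ∧ IsOpen W ∧
    (∀ a ∈ W, ∀ b ∈ W, a.1.2.2 = b.1.2.2 → a = b) ∧
    ∀ a ∈ W, ∀ b ∈ W, a.1.1 = b.1.1 → a = b

/-- The Steinberg algebra `A_K(𝔊_𝒢)` (as a subspace of `K^{𝔊_𝒢}`): the `K`-span of the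
characteristic functions of compact open bisections. -/
def SteinbergSpan : Submodule K (U.Grpd → K) :=
  Submodule.span K {f : U.Grpd → K |
    ∃ W : Set U.Grpd, U.IsCOB W ∧ f = Set.indicator W fun _ => (1 : K)}

/-- The span of characteristic functions of `n`-homogeneous compact open bisections:
the degree-`n` component `A_K(𝔊_𝒢)_n`. -/
def SteinbergComp (n : ℤ) : Submodule K (U.Grpd → K) :=
  Submodule.span K {f : U.Grpd → K |
    ∃ W : Set U.Grpd, U.IsCOB W ∧ W ⊆ {g : U.Grpd | g.1.2.1 = n} ∧
      f = Set.indicator W fun _ => (1 : K)}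

end Ultragraph

namespace Ultragraph

variable {V E : Type} (K : Type) [Field K] (U : Ultragraph V E)

/-- The `K`-vector space `V_A` (`A = r(x)`), with basis `{z ∈ 𝔭 : r(z) = A}`. -/
abbrev ModVx (A : Set V) : Type :=
  {z : List E × Set V // U.IsUPath z ∧ z.2 = A} →₀ K

/-- The prescribed `L_K(𝒢)`-action on the basis of `V_A`, together with compatibility of
the `K`- and `L_K(𝒢)`-scalar multiplications. -/
def VxHyps (A : Set V) [instM : Module (LPA K U) (ModVx K U A)] : Prop :=
  (∀ (k : K) (a : LPA K U) (m : ModVx K U A), (k • a) • m = k • (a • m)) ∧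
  (∀ (B : Set V) (hB : U.IsG0 B) (z : {z : List E × Set V // U.IsUPath z ∧ z.2 = A}),
      ((B ∩ U.srcSet z.1).Nonempty →
        pGen K U B hB • Finsupp.single z (1 : K) = Finsupp.single z (1 : K)) ∧
      (¬ (B ∩ U.srcSet z.1).Nonempty →
        pGen K U B hB • Finsupp.single z (1 : K) = 0)) ∧
  (∀ (e : E) (z : {z : List E × Set V // U.IsUPath z ∧ z.2 = A}),
      ((U.r e ∩ U.srcSet z.1).Nonempty →
        ∀ z' : {z : List E × Set V // U.IsUPath z ∧ z.2 = A}, z'.1 = (e :: z.1.1, z.1.2) →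
          sGen K U e • Finsupp.single z (1 : K) = Finsupp.single z' (1 : K)) ∧
      (¬ (U.r e ∩ U.srcSet z.1).Nonempty →
        sGen K U e • Finsupp.single z (1 : K) = 0)) ∧
  (∀ (e : E) (z : {z : List E × Set V // U.IsUPath z ∧ z.2 = A}),
      (∀ l : List E, z.1.1 = e :: l →
        ∀ z' : {z : List E × Set V // U.IsUPath z ∧ z.2 = A}, z'.1 = (l, z.1.2) →
          stGen K U e • Finsupp.single z (1 : K) = Finsupp.single z' (1 : K)) ∧
      ((∀ l : List E, z.1.1 ≠ e :: l) →
        stGen K U e • Finsupp.single z (1 : K) = 0))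

/-- The `K`-vector space `V_{[p]}`, with basis the tail-equivalence class `[p]`. -/
abbrev ModVp (p : ℕ → E) : Type :=
  {q : ℕ → E // U.IsIPath q ∧ IPEquiv p q} →₀ K

/-- The prescribed `L_K(𝒢)`-action on the basis of `V_{[p]}`, together with compatibility
of the `K`- and `L_K(𝒢)`-scalar multiplications. -/
def VpHyps (p : ℕ → E) [instM : Module (LPA K U) (ModVp K U p)] : Prop :=
  (∀ (k : K) (a : LPA K U) (m : ModVp K U p), (k • a) • m = k • (a • m)) ∧
  (∀ (B : Set V) (hB : U.IsG0 B) (q : {q : ℕ → E // U.IsIPath q ∧ IPEquiv p q}),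
      (U.s (q.1 0) ∈ B →
        pGen K U B hB • Finsupp.single q (1 : K) = Finsupp.single q (1 : K)) ∧
      (U.s (q.1 0) ∉ B →
        pGen K U B hB • Finsupp.single q (1 : K) = 0)) ∧
  (∀ (e : E) (q : {q : ℕ → E // U.IsIPath q ∧ IPEquiv p q}),
      (U.s (q.1 0) ∈ U.r e →
        ∀ q' : {q : ℕ → E // U.IsIPath q ∧ IPEquiv p q}, q'.1 = prependL [e] q.1 →
          sGen K U e • Finsupp.single q (1 : K) = Finsupp.single q' (1 : K)) ∧
      (U.s (q.1 0) ∉ U.r e →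
        sGen K U e • Finsupp.single q (1 : K) = 0)) ∧
  (∀ (e : E) (q : {q : ℕ → E // U.IsIPath q ∧ IPEquiv p q}),
      (q.1 0 = e →
        ∀ q' : {q : ℕ → E // U.IsIPath q ∧ IPEquiv p q}, q'.1 = shiftL 1 q.1 →
          stGen K U e • Finsupp.single q (1 : K) = Finsupp.single q' (1 : K)) ∧
      (q.1 0 ≠ e →
        stGen K U e • Finsupp.single q (1 : K) = 0))

/-- A rational infinite path: tail-equivalent to `c^∞` for some cycle `c`. -/
def IsRationalP (p : ℕ → E) : Prop :=
  ∃ (c : List E) (hc : c ≠ []), U.IsCycle c ∧ IPEquiv p (periodicL c hc)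

/-- The Laurent polynomial ring `K[t,t⁻¹]`. -/
abbrev LaurK : Type := LaurentPolynomial K

/-- The quotient `K[t,t⁻¹]/(f)`. -/
abbrev QuotF (f : LaurK K) : Type := LaurK K ⧸ Ideal.span ({f} : Set (LaurK K))

/-- The prescribed right `K[t,t⁻¹]`-structure on `V_{[p]}` induced by the isotropy
action: for `p ∼ c^∞` with `c` a cycle, `t` acts by shifting by `|c|` (prepending `c`);
together with compatibility with the `K`-structure. -/
def VpLaurHyps (p : ℕ → E) [instF : Module (LaurK K) (ModVp K U p)] : Prop :=
  (∀ (k : K) (m : ModVp K U p), (algebraMap K (LaurK K) k) • m = k • m) ∧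
  (∀ (c : List E) (hc : c ≠ []), U.IsCycle c → IPEquiv p (periodicL c hc) →
    ∀ (q q' : {q : ℕ → E // U.IsIPath q ∧ IPEquiv p q}), q.1 = prependL c q'.1 →
      (LaurentPolynomial.T 1 : LaurK K) • Finsupp.single q' (1 : K) =
        Finsupp.single q (1 : K))

/-- The module `V^f_{[p]} = V_{[p]} ⊗_{K[t,t⁻¹]} K[t,t⁻¹]/(f)`. -/
abbrev ModVf (p : ℕ → E) (f : LaurK K) [instF : Module (LaurK K) (ModVp K U p)] : Type :=
  TensorProduct (LaurK K) (ModVp K U p) (QuotF K f)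

/-- The prescribed `L_K(𝒢)`-action on `V^f_{[p]}`: the action on simple tensors is the
`V_{[p]}`-action on the first factor, and it commutes with the `K[t,t⁻¹]`-action. -/
def VfHyps (p : ℕ → E) (f : LaurK K) [instF : Module (LaurK K) (ModVp K U p)]
    [instL : Module (LPA K U) (ModVf K U p f)] : Prop :=
  (∀ (u : LaurK K) (a : LPA K U) (m : ModVf K U p f), a • u • m = u • a • m) ∧
  (∀ (B : Set V) (hB : U.IsG0 B) (q : {q : ℕ → E // U.IsIPath q ∧ IPEquiv p q})
      (w : QuotF K f),
      (U.s (q.1 0) ∈ B →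
        pGen K U B hB • (Finsupp.single q (1 : K) ⊗ₜ[LaurK K] w) =
          Finsupp.single q (1 : K) ⊗ₜ[LaurK K] w) ∧
      (U.s (q.1 0) ∉ B →
        pGen K U B hB • (Finsupp.single q (1 : K) ⊗ₜ[LaurK K] w) = 0)) ∧
  (∀ (e : E) (q : {q : ℕ → E // U.IsIPath q ∧ IPEquiv p q}) (w : QuotF K f),
      (U.s (q.1 0) ∈ U.r e →
        ∀ q' : {q : ℕ → E // U.IsIPath q ∧ IPEquiv p q}, q'.1 = prependL [e] q.1 →
          sGen K U e • (Finsupp.single q (1 : K) ⊗ₜ[LaurK K] w) =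
            Finsupp.single q' (1 : K) ⊗ₜ[LaurK K] w) ∧
      (U.s (q.1 0) ∉ U.r e →
        sGen K U e • (Finsupp.single q (1 : K) ⊗ₜ[LaurK K] w) = 0)) ∧
  (∀ (e : E) (q : {q : ℕ → E // U.IsIPath q ∧ IPEquiv p q}) (w : QuotF K f),
      (q.1 0 = e →
        ∀ q' : {q : ℕ → E // U.IsIPath q ∧ IPEquiv p q}, q'.1 = shiftL 1 q.1 →
          stGen K U e • (Finsupp.single q (1 : K) ⊗ₜ[LaurK K] w) =
            Finsupp.single q' (1 : K) ⊗ₜ[LaurK K] w) ∧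
      (q.1 0 ≠ e →
        stGen K U e • (Finsupp.single q (1 : K) ⊗ₜ[LaurK K] w) = 0))

end Ultragraph

namespace Ultragraph

variable {V E : Type} (U : Ultragraph V E)

/-- `μ` is eventually periodic: `μ = p·σσσ⋯` for a finite list `p` and a cycle `σ`. -/
def IsEvPeriodic (μ : XType V E) : Prop :=
  ∃ (l c : List E) (hc : c ≠ []), U.IsCycle c ∧ μ = Sum.inr (prependL l (periodicL c hc))

end Ultragraph

/-!
Suppose `g = (p, k, p)` with `k ≠ 0` lay in the interior of the nontrivial isotropy of `𝔊_𝒢|_D`.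
Only an infinite path `p` carries such isotropy, and then `τ_{>A} p = τ_{>B} p` with `A - B = k`,
so from some point on `p` keeps returning to a vertex `v` along one first-return path `c`.
A basic neighbourhood `⋂ 𝒜(x, y, K, Q)` of `g` only sees the edges of `p` up to a fixed length
and the tail relation between the two coordinates. Condition (K) supplies a first-return path
`c' ≠ c` at `v`; inserting it into `p` late enough gives a path `p'`, and shifting gives `q'`, such
that `(p', k, q')` stays in the neighbourhood and is tail-equivalent to `p` on both sides (so it
lies in `𝔊_𝒢|_D` by invariance), while `p' ≠ q'` because `p'` is no longer periodic with lag `k`.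
-/

def takeL {E : Type} (n : ℕ) (p : ℕ → E) : List E := List.ofFn fun i : Fin n => p i

section InfinitePaths

variable {E : Type}

@[simp]
theorem length_takeL (n : ℕ) (p : ℕ → E) : (takeL n p).length = n := List.length_ofFn

@[simp]
theorem getElem_takeL (n : ℕ) (p : ℕ → E) (i : ℕ) (h : i < (takeL n p).length) :
    (takeL n p)[i] = p i := by
  simp [takeL]

theorem takeL_succ (n : ℕ) (p : ℕ → E) : takeL (n + 1) p = takeL n p ++ [p n] := by
  simp only [takeL, List.ofFn_succ', List.concat_eq_append]
  rfl

theorem takeL_congr {p q : ℕ → E} {n : ℕ} (h : ∀ i < n, p i = q i) : takeL n p = takeL n q := by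
  simp only [takeL]
  congr 1
  funext i
  exact h i i.2

theorem prependL_of_lt {l : List E} {f : ℕ → E} {n : ℕ} (h : n < l.length) :
    prependL l f n = l[n] :=
  dif_pos h

theorem prependL_of_le {l : List E} {f : ℕ → E} {n : ℕ} (h : l.length ≤ n) :
    prependL l f n = f (n - l.length) :=
  dif_neg (by omega)

theorem shiftL_shiftL (m n : ℕ) (p : ℕ → E) : shiftL m (shiftL n p) = shiftL (n + m) p := by
  funext i
  simp only [shiftL, Nat.add_assoc, Nat.add_comm m n]

@[simp]
theorem shiftL_prependL (l : List E) (f : ℕ → E) : shiftL l.length (prependL l f) = f := by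
  funext n
  simp [shiftL, prependL_of_le]

@[simp]
theorem takeL_prependL (l : List E) (f : ℕ → E) : takeL l.length (prependL l f) = l :=
  List.ext_getElem (by simp) fun n h _ => by simp [prependL_of_lt (by simpa using h)]

@[simp]
theorem prependL_takeL_shiftL (n : ℕ) (p : ℕ → E) : prependL (takeL n p) (shiftL n p) = p := by
  funext i
  by_cases h : i < n
  · simp [prependL_of_lt, h]
  · simp [prependL_of_le, shiftL, Nat.sub_add_cancel (not_lt.1 h), not_lt.1 h]

theorem apply_add_sub_of_shiftL_eq {p : ℕ → E} {A B N : ℕ} (h : shiftL A p = shiftL B p)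
    (hAB : A ≤ B) (hAN : A ≤ N) : p (N + (B - A)) = p N := by
  have h' := congrFun h (N - A)
  simp only [shiftL, Nat.sub_add_cancel hAN] at h'
  rw [h', show N - A + B = N + (B - A) by omega]

theorem eq_of_shiftL_eq_of_eqOn {p q : ℕ → E} {A B : ℕ} (hAB : A ≠ B)
    (hp : shiftL A p = shiftL B p) (hq : shiftL A q = shiftL B q)
    (hpq : ∀ n < max A B, p n = q n) : p = q := by
  wlog hlt : A < B generalizing A B
  · exact this hAB.symm hp.symm hq.symm (by rwa [max_comm]) (by omega)
  have hback : ∀ r : ℕ → E, shiftL A r = shiftL B r → ∀ n, B ≤ n → r n = r (n - B + A) :=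
    fun r hr n hn => by simpa [shiftL, Nat.sub_add_cancel hn] using (congrFun hr (n - B)).symm
  funext n
  induction n using Nat.strong_induction_on with
  | _ n ih =>
    by_cases hn : n < B
    · exact hpq n (by omega)
    · rw [hback p hp n (by omega), hback q hq n (by omega), ih _ (by omega)]

theorem shiftL_eq_of_eqOn {p p' q' : ℕ → E} {a b A B : ℕ} (hab : shiftL a p = shiftL b p)
    (hk : a + B = A + b) (hp' : ∀ n < A, p' n = p n) (hq' : ∀ n < B, q' n = p n)
    (hAB : shiftL A p' = shiftL B q') : shiftL a p' = shiftL b q' := by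
  funext m
  simp only [shiftL]
  by_cases hm : m + a < A
  · rw [hp' _ hm, hq' _ (by omega)]
    exact congrFun hab m
  · have := congrFun hAB (m + a - A)
    simp only [shiftL] at this
    rwa [show m + a - A + A = m + a by omega, show m + a - A + B = m + b by omega] at this

end InfinitePaths

theorem exists_finite_subset_mem_sInter_of_mem_interior {X : Type*} [t : TopologicalSpace X]
    {𝒮 : Set (Set X)} (h𝒮 : t = TopologicalSpace.generateFrom 𝒮) {R : Set X} {Z : Set R} {x : R}
    (hx : x ∈ interior Z) : ∃ T ⊆ 𝒮, T.Finite ∧ x.1 ∈ ⋂₀ T ∧ ∀ y : R, y.1 ∈ ⋂₀ T → y ∈ Z := by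
  obtain ⟨O, hOZ, hO, hxO⟩ := mem_interior.1 hx
  obtain ⟨W, hW, rfl⟩ := isOpen_induced_iff.1 hO
  obtain ⟨_, ⟨T, ⟨hT, hT𝒮⟩, rfl⟩, hxT, hTW⟩ :=
    (TopologicalSpace.isTopologicalBasis_of_subbasis h𝒮).exists_subset_of_mem_open hxO hW
  exact ⟨T, hT𝒮, hT, hxT, fun y hy => hOZ (hTW hy)⟩

namespace Ultragraph

variable {V E : Type} {U : Ultragraph V E}

theorem isIPath_shiftL {f : ℕ → E} (hf : U.IsIPath f) (m : ℕ) : U.IsIPath (shiftL m f) :=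
  fun n => by simpa only [shiftL, Nat.add_right_comm n 1 m] using hf (n + m)

theorem isEdgePath_takeL {f : ℕ → E} (hf : U.IsIPath f) (n : ℕ) : U.IsEdgePath (takeL n f) :=
  List.isChain_iff_getElem.2 fun i h => by simpa [Adj] using hf i

theorem s_mem_r_of_mem_getLast?_takeL {f : ℕ → E} (hf : U.IsIPath f) {n : ℕ} {e : E}
    (he : e ∈ (takeL n f).getLast?) : U.s (f n) ∈ U.r e := by
  cases n with
  | zero => simp [takeL] at he
  | succ n =>
    rw [takeL_succ, List.getLast?_concat, Option.mem_some_iff] at he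
    exact he ▸ hf n

theorem isIPath_prependL {l : List E} {f : ℕ → E} (hl : U.IsEdgePath l) (hf : U.IsIPath f)
    (hlf : ∀ e ∈ l.getLast?, U.s (f 0) ∈ U.r e) : U.IsIPath (prependL l f) := by
  intro n
  rcases lt_trichotomy (n + 1) l.length with h | h | h
  · rw [prependL_of_lt h, prependL_of_lt (by omega)]
    exact List.isChain_iff_getElem.1 hl n h
  · rw [prependL_of_lt (by omega), prependL_of_le h.ge, h, Nat.sub_self]
    exact hlf _ (by simp [List.getLast?_eq_getElem?, ← h])
  · rw [prependL_of_le (by omega), prependL_of_le (by omega),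
      show n + 1 - l.length = n - l.length + 1 by omega]
    exact hf _

theorem isIPath_prependL_takeL {p f : ℕ → E} (hp : U.IsIPath p) (hf : U.IsIPath f) {N : ℕ}
    (hfp : U.s (f 0) = U.s (p N)) : U.IsIPath (prependL (takeL N p) f) :=
  isIPath_prependL (isEdgePath_takeL hp N) hf fun _ he =>
    hfp ▸ s_mem_r_of_mem_getLast?_takeL hp he

theorem isUPath_takeL {f : ℕ → E} (hf : U.IsIPath f) (n : ℕ) :
    U.IsUPath (takeL n f, {U.s (f n)}) :=
  ⟨isEdgePath_takeL hf n, IsG0.vertex _, fun _ he =>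
    Set.singleton_subset_iff.2 (s_mem_r_of_mem_getLast?_takeL hf he)⟩

theorem IsFirstReturn.eq_of_takeL {v : V} {c c' : List E} {q : ℕ → E}
    (hc : U.IsFirstReturn v c) (hc' : U.IsFirstReturn v c')
    (hqc : takeL c.length q = c) (hqc' : takeL c'.length q = c')
    (hv : U.s (q c.length) = v) (hv' : U.s (q c'.length) = v) : c = c' := by
  suffices hlen : c.length = c'.length by rw [← hqc, ← hqc', hlen]
  by_contra hne
  wlog hlt : c.length < c'.length generalizing c c'
  · exact this hc' hc hqc' hqc hv' hv (Ne.symm hne) (by omega)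
  have hget : c'[c.length] = q c.length := by
    rw [List.getElem_of_eq hqc'.symm]
    simp
  exact hc'.2.2.2.2 c.length hlt (List.length_pos_iff.2 hc.1) (by simpa [hget] using hv)

theorem exists_isFirstReturn_takeL {q : ℕ → E} (hq : U.IsIPath q) {d : ℕ} (hd : 0 < d)
    (hret : U.s (q d) = U.s (q 0)) :
    ∃ n, U.IsFirstReturn (U.s (q 0)) (takeL n q) ∧ U.s (q n) = U.s (q 0) := by
  have hex : ∃ n, 0 < n ∧ U.s (q n) = U.s (q 0) := ⟨d, hd, hret⟩
  obtain ⟨hpos, hn⟩ := Nat.find_spec hex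
  obtain ⟨m, hm⟩ : ∃ m, Nat.find hex = m + 1 := Nat.exists_eq_add_one.2 hpos
  refine ⟨Nat.find hex, ⟨?_, isEdgePath_takeL hq _, ⟨q 0, ?_, rfl⟩, ?_, fun i hi hi0 h => ?_⟩, hn⟩
  · simp [← List.length_pos_iff, hpos]
  · simp [hm, takeL]
  · rw [hm, takeL_succ, rList, List.getLast?_concat]
    rw [← hn, hm]
    exact hq m
  · simp only [length_takeL] at hi
    exact Nat.find_min hex hi ⟨hi0, by simpa using h⟩

theorem ConditionK.exists_isFirstReturn_ne (hK : U.ConditionK) {v : V} {c : List E}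
    (hc : U.IsFirstReturn v c) : ∃ c', U.IsFirstReturn v c' ∧ c' ≠ c := by
  rcases hK v with hnone | ⟨c₁, c₂, h₁, h₂, h₁₂⟩
  · exact absurd hc (hnone c)
  by_cases h : c₁ = c
  · exact ⟨c₂, h₂, fun h' => h₁₂ (h.trans h'.symm)⟩
  · exact ⟨c₁, h₁, h⟩

theorem ConditionK.exists_shiftL_ne (hK : U.ConditionK) {p : ℕ → E} (hp : U.IsIPath p)
    {A B N : ℕ} (hAB : A ≠ B) (hper : shiftL A p = shiftL B p) (hAN : A ≤ N) (hBN : B ≤ N) :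
    ∃ p', U.IsIPath p' ∧ (∀ n < N, p' n = p n) ∧ (∃ j, shiftL j p' = shiftL N p) ∧
      shiftL A p' ≠ shiftL B p' := by
  set q := shiftL N p
  have hq : U.IsIPath q := isIPath_shiftL hp N
  obtain ⟨d, hd, hret⟩ : ∃ d, 0 < d ∧ q d = q 0 := by
    rcases hAB.lt_or_gt with h | h
    · exact ⟨B - A, by omega, by simpa [q, shiftL, Nat.add_comm] using
        apply_add_sub_of_shiftL_eq hper h.le hAN⟩
    · exact ⟨A - B, by omega, by simpa [q, shiftL, Nat.add_comm] using
        apply_add_sub_of_shiftL_eq hper.symm h.le hBN⟩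
  obtain ⟨n, hc, hcv⟩ := exists_isFirstReturn_takeL hq hd (congrArg U.s hret)
  obtain ⟨c', hc', hne⟩ := hK.exists_isFirstReturn_ne hc
  have hc'q : U.s (prependL c' q 0) = U.s (p N) := by
    obtain ⟨e, he, hse⟩ := hc'.2.2.1
    obtain ⟨e', c'', rfl⟩ := List.exists_cons_of_ne_nil hc'.1
    obtain rfl : e' = e := by simpa using he
    simpa [prependL_of_lt, q, shiftL] using hse
  have hc'q_path : U.IsIPath (prependL c' q) := isIPath_prependL hc'.2.1 hq fun e he => by
    simpa [rList, Option.mem_def.1 he] using hc'.2.2.2.1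
  have hN : shiftL N (prependL (takeL N p) (prependL c' q)) = prependL c' q := by
    simpa using shiftL_prependL (takeL N p) (prependL c' q)
  refine ⟨prependL (takeL N p) (prependL c' q), isIPath_prependL_takeL hp hc'q_path hc'q,
    fun m hm => by simp [prependL_of_lt, hm], ⟨N + c'.length, ?_⟩, fun h => hne ?_⟩
  · rw [← shiftL_shiftL, hN, shiftL_prependL]
  · have hpp : prependL (takeL N p) (prependL c' q) = p :=
      eq_of_shiftL_eq_of_eqOn hAB h hper fun m hm => by
        simp [prependL_of_lt, hm.trans_le (max_le hAN hBN)]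
    have hc'q_eq : prependL c' q = q := by rw [← hN, hpp]
    refine hc'.eq_of_takeL (q := q) hc ?_ (by simp) ?_ (by simpa using hcv)
    · rw [← hc'q_eq, takeL_prependL]
    · rw [← hc'q_eq, prependL_of_le le_rfl, Nat.sub_self, hc'q_eq]

theorem mem_ASetRaw_inr_iff {x y : List E × Set V} {a b : ℕ → E} {k : ℤ} :
    ((Sum.inr a, k, Sum.inr b) : Trip V E) ∈ U.ASetRaw x y ↔
      U.IsIPath a ∧ U.IsIPath b ∧ takeL x.1.length a = x.1 ∧ takeL y.1.length b = y.1 ∧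
        shiftL x.1.length a = shiftL y.1.length b ∧ U.s (a x.1.length) ∈ x.2 ∩ y.2 ∧
        k = x.1.length - y.1.length := by
  constructor
  · rintro ⟨μ | ρ, -, hcx, hcy, hxμ, hyμ, heq⟩
    · simp [concatXel] at heq
    · simp only [concatXel, Prod.mk.injEq, Sum.inr.injEq] at heq
      obtain ⟨rfl, rfl, rfl⟩ := heq
      refine ⟨hxμ, hyμ, takeL_prependL _ _, takeL_prependL _ _, by simp, ?_, rfl⟩
      rw [prependL_of_le le_rfl, Nat.sub_self]
      exact ⟨hcx, hcy⟩
  · rintro ⟨ha, hb, hxa, hyb, hsh, hs, rfl⟩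
    have hx : prependL x.1 (shiftL x.1.length a) = a := by
      conv_rhs => rw [← prependL_takeL_shiftL x.1.length a, hxa]
    have hy : prependL y.1 (shiftL x.1.length a) = b := by
      rw [hsh]
      conv_rhs => rw [← prependL_takeL_shiftL y.1.length b, hyb]
    refine ⟨Sum.inr (shiftL x.1.length a), isIPath_shiftL ha _, ?_, ?_, ?_, ?_, ?_⟩
    · simpa [CanConcatX, shiftL] using hs.1
    · simpa [CanConcatX, shiftL] using hs.2
    · exact (congrArg U.IsIPath hx).mpr ha
    · exact (congrArg U.IsIPath hy).mpr hb
    · simp [concatXel, hx, hy]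

theorem inGrpd_iff {g : Trip V E} :
    U.InGrpd g ↔ ∃ x y, U.IsUPath x ∧ U.IsUPath y ∧ x.2 = y.2 ∧ g ∈ U.ASetRaw x y := by
  constructor
  · rintro ⟨x, y, μ, hx, hy, hμ, hxy, h⟩
    exact ⟨x, y, hx, hy, hxy, μ, hμ, h⟩
  · rintro ⟨x, y, hx, hy, hxy, μ, hμ, h⟩
    exact ⟨x, y, μ, hx, hy, hμ, hxy, h⟩

theorem inGrpd_inr_iff {a b : ℕ → E} {k : ℤ} :
    U.InGrpd (Sum.inr a, k, Sum.inr b) ↔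
      U.IsIPath a ∧ U.IsIPath b ∧ ∃ m n : ℕ, shiftL m a = shiftL n b ∧ k = m - n := by
  constructor
  · intro h
    obtain ⟨x, y, -, -, -, h⟩ := inGrpd_iff.1 h
    obtain ⟨ha, hb, -, -, hsh, -, hk⟩ := mem_ASetRaw_inr_iff.1 h
    exact ⟨ha, hb, _, _, hsh, hk⟩
  · rintro ⟨ha, hb, m, n, hsh, rfl⟩
    have hab : a m = b n := by simpa [shiftL] using congrFun hsh 0
    refine inGrpd_iff.2 ⟨_, _, isUPath_takeL ha m, isUPath_takeL hb n, by simp [hab], ?_⟩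
    exact mem_ASetRaw_inr_iff.2
      ⟨ha, hb, by simp, by simp, by simpa using hsh, by simp [hab], by simp⟩

theorem exists_eq_inr_of_inGrpd {u : XType V E} {k : ℤ} (hu : U.InGrpd (u, k, u)) (hk : k ≠ 0) :
    ∃ p, u = Sum.inr p := by
  rcases u with w | p
  · obtain ⟨x, y, μ | ρ, -, -, -, -, -, -, -, -, heq⟩ := hu
    · simp only [concatXel, concatU, Prod.mk.injEq, Sum.inl.injEq] at heq
      obtain ⟨hx, hk', hy⟩ := heq
      have := congrArg (fun z => z.1.length) (hx.symm.trans hy)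
      simp only [List.length_append] at this
      omega
    · simp [concatXel] at heq
  · exact ⟨p, rfl⟩

theorem mem_ASetRaw_concatU_edge_iff {x y : List E × Set V} {a b : ℕ → E} {k : ℤ} {e : E}
    (h : ((Sum.inr a, k, Sum.inr b) : Trip V E) ∈ U.ASetRaw x y) :
    ((Sum.inr a, k, Sum.inr b) : Trip V E) ∈
        U.ASetRaw (concatU x ([e], U.r e)) (concatU y ([e], U.r e)) ↔ a x.1.length = e := by
  obtain ⟨ha, hb, hxa, hyb, hsh, -, rfl⟩ := mem_ASetRaw_inr_iff.1 h
  have hba : b y.1.length = a x.1.length := by simpa [shiftL] using (congrFun hsh 0).symm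
  simp only [concatU, List.cons_ne_nil, if_false, mem_ASetRaw_inr_iff, List.length_append,
    List.length_singleton, takeL_succ, hxa, hyb, hba, ← shiftL_shiftL, hsh, Set.inter_self,
    List.append_cancel_left_eq, List.singleton_inj]
  constructor
  · exact fun h => h.2.2.1
  · rintro rfl
    exact ⟨ha, hb, rfl, rfl, trivial, ha _, by push_cast; ring⟩

theorem mem_ASetRaw_concatU_nil_iff {x y : List E × Set V} {a b : ℕ → E} {k : ℤ} {C : Set V}
    (h : ((Sum.inr a, k, Sum.inr b) : Trip V E) ∈ U.ASetRaw x y) :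
    ((Sum.inr a, k, Sum.inr b) : Trip V E) ∈
        U.ASetRaw (concatU x (([] : List E), C)) (concatU y (([] : List E), C)) ↔
      U.s (a x.1.length) ∈ C := by
  obtain ⟨ha, hb, hxa, hyb, hsh, hs, rfl⟩ := mem_ASetRaw_inr_iff.1 h
  simp only [concatU, List.append_nil, if_true, mem_ASetRaw_inr_iff]
  constructor
  · rintro ⟨-, -, -, -, -, ⟨⟨-, hC⟩, -⟩, -⟩
    exact hC
  · exact fun hC => ⟨ha, hb, hxa, hyb, hsh, ⟨⟨hs.1, hC⟩, hs.2, hC⟩, trivial⟩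

theorem mem_ABasic_iff {g : U.Grpd} {x y : List E × Set V} {K : Set E} {Q : Set (Set V)} :
    g ∈ U.ABasic x y K Q ↔ g.1 ∈ U.ASetRaw x y ∧
      (∀ e ∈ K, g.1 ∉ U.ASetRaw (concatU x ([e], U.r e)) (concatU y ([e], U.r e))) ∧
      ∀ C ∈ Q, g.1 ∉ U.ASetRaw (concatU x (([] : List E), C)) (concatU y (([] : List E), C)) := by
  simp [ABasic, ASet]

theorem mem_ABasic_inr_iff {a b : ℕ → E} {k : ℤ} (h : U.InGrpd (Sum.inr a, k, Sum.inr b))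
    {x y : List E × Set V} {K : Set E} {Q : Set (Set V)} :
    (⟨_, h⟩ : U.Grpd) ∈ U.ABasic x y K Q ↔
      ((Sum.inr a, k, Sum.inr b) : Trip V E) ∈ U.ASetRaw x y ∧ a x.1.length ∉ K ∧
        ∀ C ∈ Q, U.s (a x.1.length) ∉ C := by
  refine mem_ABasic_iff.trans (and_congr_right fun hxy => and_congr ?_ ?_)
  · simp only [mem_ASetRaw_concatU_edge_iff hxy]
    exact ⟨fun h hK => h _ hK rfl, fun h e he hae => h (hae ▸ he)⟩
  · simp only [mem_ASetRaw_concatU_nil_iff hxy]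

theorem exists_length_bound {T : Set (Set U.Grpd)} (hTB : T ⊆ U.BasicSets) (hT : T.Finite) :
    ∃ m : ℕ, ∀ S ∈ T, ∃ x y K Q, S = U.ABasic x y K Q ∧ x.1.length < m ∧ y.1.length < m := by
  refine ((Filter.eventually_all_finite (l := Filter.atTop) hT).2 fun S hS => ?_).exists
  obtain ⟨x, y, K, Q, -, -, -, -, -, -, -, rfl⟩ := hTB hS
  filter_upwards [Filter.eventually_gt_atTop x.1.length, Filter.eventually_gt_atTop y.1.length]
    with m hx hy
  exact ⟨x, y, K, Q, rfl, hx, hy⟩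

theorem mem_ABasic_of_eqOn {x y : List E × Set V} {K : Set E} {Q : Set (Set V)}
    {p p' q' : ℕ → E} {k : ℤ} {A B : ℕ} {hg : U.InGrpd (Sum.inr p, k, Sum.inr p)}
    (hgS : (⟨_, hg⟩ : U.Grpd) ∈ U.ABasic x y K Q) (hg' : U.InGrpd (Sum.inr p', k, Sum.inr q'))
    (hxA : x.1.length < A) (hyB : y.1.length ≤ B) (hk : k = A - B)
    (hp' : ∀ n < A, p' n = p n) (hq' : ∀ n < B, q' n = p n) (hAB : shiftL A p' = shiftL B q') :
    (⟨_, hg'⟩ : U.Grpd) ∈ U.ABasic x y K Q := by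
  obtain ⟨hxy, hK, hQ⟩ := (mem_ABasic_inr_iff hg).1 hgS
  obtain ⟨-, -, hxp, hyp, hsh, hs, hk'⟩ := mem_ASetRaw_inr_iff.1 hxy
  obtain ⟨hp'I, hq'I, -⟩ := inGrpd_inr_iff.1 hg'
  have hpx : p' x.1.length = p x.1.length := hp' _ hxA
  refine (mem_ABasic_inr_iff hg').2 ⟨mem_ASetRaw_inr_iff.2 ⟨hp'I, hq'I, ?_, ?_,
    shiftL_eq_of_eqOn hsh (by omega) hp' hq' hAB, hpx ▸ hs, by omega⟩, hpx ▸ hK, hpx ▸ hQ⟩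
  · exact (takeL_congr fun i hi => hp' i (by omega)).trans hxp
  · exact (takeL_congr fun i hi => hq' i (by omega)).trans hyp

variable (U) in
/-- `U.SrcInD D g` and `U.RngInD D g` unfold to `U.UnitIn D (srcT g.1)` and
`U.UnitIn D (rngT g.1)`. -/
def UnitIn (D : Set U.Grpd) (u : Trip V E) : Prop := ∃ h : U.InGrpd u, (⟨u, h⟩ : U.Grpd) ∈ D

theorem inGrpd_rngT {g : Trip V E} (hg : U.InGrpd g) : U.InGrpd (rngT g) := by
  obtain ⟨x, y, μ, hx, hy, hμ, hxy, hcx, hcy, hxμ, hyμ, rfl⟩ := hg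
  exact ⟨x, x, μ, hx, hx, hμ, rfl, hcx, hcx, hxμ, hxμ, by simp [rngT]⟩

theorem InvariantSet.unitIn_rngT {D : Set U.Grpd} (hD : U.InvariantSet D) {g : Trip V E}
    (hg : U.InGrpd g) (h : U.UnitIn D (srcT g)) : U.UnitIn D (rngT g) :=
  ⟨inGrpd_rngT hg, hD ⟨g, hg⟩ h.1 (inGrpd_rngT hg) h.2⟩

theorem exists_mem_restrSet_mem_sInter_ne (hK : U.ConditionK) {D : Set U.Grpd}
    (hD : U.InvariantSet D) {p : ℕ → E} {k : ℤ} (hk : k ≠ 0)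
    {hg : U.InGrpd (Sum.inr p, k, Sum.inr p)} (hgD : ⟨_, hg⟩ ∈ U.RestrSet D)
    {T : Set (Set U.Grpd)} (hTB : T ⊆ U.BasicSets) (hT : T.Finite) (hgT : ⟨_, hg⟩ ∈ ⋂₀ T) :
    ∃ g ∈ U.RestrSet D, g ∈ ⋂₀ T ∧ g.1.1 ≠ g.1.2.2 := by
  obtain ⟨hp, -, a, b, hab, rfl⟩ := inGrpd_inr_iff.1 hg
  obtain ⟨m, hm⟩ := exists_length_bound hTB hT
  have hper : shiftL (a + m) p = shiftL (b + m) p := by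
    rw [← shiftL_shiftL, hab, shiftL_shiftL]
  obtain ⟨p', hp', hpp', ⟨j, hj⟩, hne⟩ :=
    hK.exists_shiftL_ne hp (N := a + b + m + 1) (by omega) hper (by omega) (by omega)
  set q' := prependL (takeL (b + m) p) (shiftL (a + m) p')
  have hq'p' : shiftL (b + m) q' = shiftL (a + m) p' := by
    simpa using shiftL_prependL (takeL (b + m) p) (shiftL (a + m) p')
  have hq' : U.IsIPath q' := isIPath_prependL_takeL hp (isIPath_shiftL hp' _) (by
    simpa [shiftL, hpp' (a + m) (by omega)] using congrArg U.s (congrFun hper 0))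
  have hg' : U.InGrpd (Sum.inr p', (a : ℤ) - b, Sum.inr q') :=
    inGrpd_inr_iff.2 ⟨hp', hq', a + m, b + m, hq'p'.symm, by push_cast; ring⟩
  have hp'D : U.UnitIn D (Sum.inr p', 0, Sum.inr p') :=
    hD.unitIn_rngT (inGrpd_inr_iff.2 ⟨hp', hp, j, _, hj, rfl⟩) hgD.1
  have hq'D : U.UnitIn D (Sum.inr q', 0, Sum.inr q') :=
    hD.unitIn_rngT (inGrpd_inr_iff.2 ⟨hq', hp', _, _, hq'p', rfl⟩) hp'D
  refine ⟨⟨_, hg'⟩, ⟨hq'D, hp'D⟩, fun S hS => ?_, fun h => hne ?_⟩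
  · obtain ⟨x, y, K, Q, rfl, hx, hy⟩ := hm S hS
    exact mem_ABasic_of_eqOn (hgT _ hS) hg' (by omega) (by omega) (by push_cast; ring)
      (fun n hn => hpp' n (by omega)) (fun n hn => by simp [q', prependL_of_lt, hn]) hq'p'.symm
  · rw [← hq'p', ← Sum.inr.inj h]

end Ultragraph

open Ultragraph in
theorem ultragraph_groupoid_strongly_effective_general
    (V E : Type) (U : Ultragraph V E) (hK : U.ConditionK) :
    ∀ D : Set U.Grpd, D ⊆ U.unitSpaceSet → D.Nonempty →
      IsClosed {u : U.unitSpaceSet | (u : U.Grpd) ∈ D} → U.InvariantSet D →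
      interior {g : U.RestrSet D |
        (g : U.Grpd).1.1 = (g : U.Grpd).1.2.2 ∧ (g : U.Grpd).1.2.1 ≠ 0} = ∅ := by
  intro D _ _ _ hD
  refine Set.eq_empty_of_forall_notMem fun g hg => ?_
  obtain ⟨T, hTB, hT, hgT, hTZ⟩ := exists_finite_subset_mem_sInter_of_mem_interior rfl hg
  obtain ⟨⟨⟨u, k, w⟩, hgG⟩, hgD⟩ := g
  have hiso := interior_subset hg
  obtain ⟨huw, hk⟩ : u = w ∧ k ≠ 0 := hiso
  subst huw
  obtain ⟨p, rfl⟩ := exists_eq_inr_of_inGrpd hgG hk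
  obtain ⟨g', hg'D, hg'T, hne⟩ := exists_mem_restrSet_mem_sInter_ne hK hD hk hgD hTB hT hgT
  exact hne (hTZ ⟨g', hg'D⟩ hg'T).1

open Ultragraph in
/-- If `𝒢` (without sinks) satisfies Condition (K), then `𝔊_𝒢` is
strongly effective: for every nonempty closed invariant subset `D` of the unit space,
the restriction `𝔊_𝒢|_D` is effective. -/
theorem ultragraph_groupoid_strongly_effective
    (V E : Type) [Countable V] [Countable E] (U : Ultragraph V E)
    (hns : U.HasNoSinks) (hK : U.ConditionK) :
    ∀ D : Set U.Grpd, D ⊆ U.unitSpaceSet → D.Nonempty →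
      IsClosed {u : U.unitSpaceSet | (u : U.Grpd) ∈ D} → U.InvariantSet D →
      interior {g : U.RestrSet D |
        (g : U.Grpd).1.1 = (g : U.Grpd).1.2.2 ∧ (g : U.Grpd).1.2.1 ≠ 0} = ∅ :=
  ultragraph_groupoid_strongly_effective_general V E U hK
end
end

section
/- Let 𝒢 be an ultragraph without sinks. Then the ℤ-graded ultragraph groupoid 𝔊_𝒢 is unperforated: for every integer n > 0 and every g ∈ (𝔊_𝒢)_n, there exist g₁, …, gₙ ∈ (𝔊_𝒢)_1 such that g = g₁ g₂ ⋯ gₙ. -/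
set_option synthInstance.maxHeartbeats 1000000
set_option maxHeartbeats 1000000

noncomputable section
open Classical TensorProduct

/-! An element `(x·μ, |x| - |y|, y·μ)` of positive degree has `|x| ≥ 1`. Deleting the first
edge of `x` gives an ultrapath `x'` with the same range for which `x'·μ` is still in `X_𝒢`, so
`g = (x·μ, 1, x'·μ) (x'·μ, |x'| - |y|, y·μ)` splits off a factor of degree one, and induction on
the degree finishes the proof. -/

instance compT_associative {V E : Type} : Std.Associative (compT (V := V) (E := E)) :=
  ⟨fun _ _ _ => by simp only [compT, add_assoc]⟩

theorem fst_foldl_compT {V E : Type} (l : List (Ultragraph.Trip V E)) (a : Ultragraph.Trip V E) :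
    (l.foldl compT a).1 = a.1 := by
  induction l generalizing a with
  | nil => rfl
  | cons b l ih => exact ih (compT a b)

theorem prependL_tail {E : Type} (l : List E) (p : ℕ → E) (hl : l ≠ []) :
    prependL l.tail p = shiftL 1 (prependL l p) := by
  obtain ⟨e, l, rfl⟩ := List.exists_cons_of_ne_nil hl
  funext n
  by_cases hn : n < l.length <;> simp [prependL, shiftL, hn]

namespace Ultragraph

variable {V E : Type} {U : Ultragraph V E}

theorem IsIPath.shiftL {p : ℕ → E} (hp : U.IsIPath p) (k : ℕ) : U.IsIPath (shiftL k p) :=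
  fun n => by simpa [_root_.shiftL, Nat.add_right_comm n 1 k] using hp (n + k)

theorem IsUPath.tail {x : List E × Set V} (hx : U.IsUPath x) : U.IsUPath (x.1.tail, x.2) := by
  obtain ⟨hchain, hG0, hrange⟩ := hx
  refine ⟨hchain.tail, hG0, fun e he => hrange e ?_⟩
  rw [List.getLast?_tail] at he
  split_ifs at he
  exact he

theorem canConcatX_of_snd_eq {x y : List E × Set V} (hxy : x.2 = y.2) {μ : XType V E}
    (hx : U.CanConcatX x μ) : U.CanConcatX y μ := by
  cases μ <;> simpa only [CanConcatX, CanConcatU, hxy] using hx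

theorem isXEl_concatXel_tail {x : List E × Set V} (hx : x.1 ≠ []) {μ : XType V E}
    (h : U.IsXEl (concatXel x μ)) : U.IsXEl (concatXel (x.1.tail, x.2) μ) := by
  cases μ with
  | inl z =>
    obtain ⟨hpath, hultra, hinf⟩ := h
    refine ⟨?_, hultra, hinf⟩
    simpa only [concatU, List.tail_append_of_ne_nil hx] using hpath.tail
  | inr p =>
    simpa only [concatXel, IsXEl, prependL_tail _ _ hx] using h.shiftL 1

theorem InGrpd.exists_eq_compT_of_pos {g : Trip V E} (hg : U.InGrpd g) (hpos : 0 < g.2.1) :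
    ∃ a b : Trip V E, U.InGrpd a ∧ a.2.1 = 1 ∧ U.InGrpd b ∧ a.2.2 = b.1 ∧ g = compT a b := by
  obtain ⟨x, y, μ, hx, hy, hμ, hxy, hcx, hcy, hXx, hXy, rfl⟩ := hg
  have hne : x.1 ≠ [] := by
    rintro h
    simp only [h, List.length_nil] at hpos
    omega
  have hlen : (x.1.tail.length : ℤ) = x.1.length - 1 := by
    rw [List.length_tail]
    have := List.length_pos_iff.mpr hne
    omega
  set x' : List E × Set V := (x.1.tail, x.2)
  have hcx' : U.CanConcatX x' μ := canConcatX_of_snd_eq rfl hcx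
  have hXx' : U.IsXEl (concatXel x' μ) := isXEl_concatXel_tail hne hXx
  refine ⟨_, _, ⟨x, x', μ, hx, hx.tail, hμ, rfl, hcx, hcx', hXx, hXx', rfl⟩, ?_,
    ⟨x', y, μ, hx.tail, hy, hμ, hxy, hcx', hcy, hXx', hXy, rfl⟩, rfl, ?_⟩
  · simp only [x', hlen]
    ring
  · simp only [compT, x', hlen, Prod.mk.injEq, true_and, and_true]
    ring

theorem InGrpd.exists_chain_of_deg_eq_succ (k : ℕ) {g : Trip V E} (hg : U.InGrpd g)
    (hdeg : g.2.1 = k + 1) :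
    ∃ (a : Trip V E) (l : List (Trip V E)),
      (a :: l).length = k + 1 ∧
      (∀ b ∈ a :: l, U.InGrpd b ∧ b.2.1 = 1) ∧
      List.IsChain (fun b c => b.2.2 = c.1) (a :: l) ∧
      g = l.foldl compT a := by
  induction k generalizing g with
  | zero => exact ⟨g, [], rfl, by simpa using ⟨hg, hdeg⟩, List.isChain_singleton g, rfl⟩
  | succ k ih =>
    obtain ⟨a, b, ha, ha1, hb, hab, rfl⟩ := hg.exists_eq_compT_of_pos (by rw [hdeg]; positivity)
    have hbdeg : b.2.1 = k + 1 := by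
      simp only [compT, ha1] at hdeg
      push_cast at hdeg
      omega
    obtain ⟨c, l, hlen, hmem, hchain, rfl⟩ := ih hb hbdeg
    refine ⟨a, c :: l, by simp [hlen], ?_, ?_, List.foldl_assoc.symm⟩
    · rintro d (_ | ⟨_, hd⟩)
      exacts [⟨ha, ha1⟩, hmem d hd]
    · exact List.isChain_cons_cons.mpr ⟨by rw [hab, fst_foldl_compT], hchain⟩

end Ultragraph

open Ultragraph in
theorem ultragraph_groupoid_unperforated_general
    (V E : Type) (U : Ultragraph V E) :
    ∀ n : ℤ, 0 < n → ∀ g : Trip V E, U.InGrpd g → g.2.1 = n →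
      ∃ (a : Trip V E) (l : List (Trip V E)),
        (a :: l).length = n.toNat ∧
        (∀ b ∈ a :: l, U.InGrpd b ∧ b.2.1 = 1) ∧
        List.Chain' (fun b c => b.2.2 = c.1) (a :: l) ∧
        g = l.foldl compT a := by
  intro n hn g hg hgn
  obtain ⟨k, rfl⟩ : ∃ k : ℕ, n = k + 1 := ⟨n.toNat - 1, by omega⟩
  rw [show ((k : ℤ) + 1).toNat = k + 1 by omega]
  exact hg.exists_chain_of_deg_eq_succ k hgn

open Ultragraph in
/-- The ℤ-graded ultragraph groupoid `𝔊_𝒢` (`𝒢` without sinks) is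
unperforated: every `g` of degree `n > 0` is a product of `n` elements of degree `1`. -/
theorem ultragraph_groupoid_unperforated
    (V E : Type) [Countable V] [Countable E] (U : Ultragraph V E)
    (hns : U.HasNoSinks) :
    ∀ n : ℤ, 0 < n → ∀ g : Trip V E, U.InGrpd g → g.2.1 = n →
      ∃ (a : Trip V E) (l : List (Trip V E)),
        (a :: l).length = n.toNat ∧
        (∀ b ∈ a :: l, U.InGrpd b ∧ b.2.1 = 1) ∧
        List.Chain' (fun b c => b.2.2 = c.1) (a :: l) ∧
        g = l.foldl compT a :=
  ultragraph_groupoid_unperforated_general V E U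
end
end
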